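/- arXiv:math/0405268 — 5 statements merged into one kernel-verified Lean document; each statement's English description precedes it below -/
import Mathlib

section
/- Let ({E_λ}_{λ∈Λ}, {m_{λ,λ'}}_{λ⪯λ'}) be a regular projective system of topological graphs over a directed set Λ which is surjective, i.e., m_{λ,λ'}^0 : Ẽ_{λ'}^0 → Ẽ_λ^0 is surjective for all λ ⪯ λ'. Let E be the projective limit. Then for every v ∈ E^0_rg there exists λ ∈ Λ such that m_λ^0(v) ∈ (E_λ^0)_rg. -/
open Set Filter OnePoint

namespace TopGraphAux

/-- `E⁰_sce`: the open set of sources of a topological graph. -/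
def graphSce {E0 E1 : Type*} [TopologicalSpace E0] (r : E1 → E0) : Set E0 :=
  (closure (Set.range r))ᶜ

/-- `E⁰_fin`: vertices having a neighborhood whose `r`-preimage is compact. -/
def graphFin {E0 E1 : Type*} [TopologicalSpace E0] [TopologicalSpace E1] (r : E1 → E0) :
    Set E0 :=
  {v | ∃ V ∈ nhds v, IsCompact (r ⁻¹' V)}

/-- `E⁰_rg`: the open set of regular vertices of a topological graph. -/
def graphRg {E0 E1 : Type*} [TopologicalSpace E0] [TopologicalSpace E1] (r : E1 → E0) :
    Set E0 :=
  graphFin r \ closure (graphSce r)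

/-- A factor map from the topological graph `F = (F0, F1, dF, rF)` to the topological graph
`E = (E0, E1, dE, rE)`: a pair of continuous maps between one-point compactifications sending
`∞` to `∞`, intertwining range and domain maps, and with the unique edge-lifting property. -/
structure IsFactorMap {E0 E1 F0 F1 : Type*}
    [TopologicalSpace E0] [TopologicalSpace E1] [TopologicalSpace F0] [TopologicalSpace F1]
    (dE rE : E1 → E0) (dF rF : F1 → F0)
    (m0 : OnePoint F0 → OnePoint E0) (m1 : OnePoint F1 → OnePoint E1) : Prop where
  continuous_m0 : Continuous m0
  continuous_m1 : Continuous m1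
  map_infty0 : m0 ∞ = ∞
  map_infty1 : m1 ∞ = ∞
  compat : ∀ (e : F1) (e' : E1), m1 ↑e = ↑e' →
    (↑(rE e') : OnePoint E0) = m0 ↑(rF e) ∧ (↑(dE e') : OnePoint E0) = m0 ↑(dF e)
  lift : ∀ (e' : E1) (v : F0), (↑(dE e') : OnePoint E0) = m0 ↑v →
    ∃! e : F1, m1 ↑e = (↑e' : OnePoint E1) ∧ dF e = v

/-- Regularity of a factor map: every vertex mapping to a regular vertex receives an edge,
and all edges it receives are mapped to genuine edges. -/
def IsRegularFactorMap {E0 E1 F0 F1 : Type*}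
    [TopologicalSpace E0] [TopologicalSpace E1] [TopologicalSpace F0] [TopologicalSpace F1]
    (rE : E1 → E0) (rF : F1 → F0)
    (m0 : OnePoint F0 → OnePoint E0) (m1 : OnePoint F1 → OnePoint E1) : Prop :=
  ∀ (v : F0) (w : E0), m0 ↑v = ↑w → w ∈ graphRg rE →
    (∃ e : F1, rF e = v) ∧ ∀ e : F1, rF e = v → ∃ e' : E1, m1 ↑e = ↑e'

/-- `f` restricts to a homeomorphism from `U` onto `V`. -/
def IsHomeoOn {X Y : Type*} [TopologicalSpace X] [TopologicalSpace Y]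
    (f : X → Y) (U : Set X) (V : Set Y) : Prop :=
  ∃ h : U ≃ₜ V, ∀ x : U, (h x : Y) = f (x : X)

/-- Extension of a map `A → OnePoint B` to the one-point compactification, sending `∞` to `∞`. -/
def onePointLift {A B : Type*} (f : A → OnePoint B) : OnePoint A → OnePoint B :=
  fun x => Option.elim x ∞ f

/-- The relation identifying the copy in `S` of each point of `B ⊆ S` with the corresponding
point of `X`. -/
def glueRel {X : Type*} (S B : Set X) : (X ⊕ ↥S) → (X ⊕ ↥S) → Prop :=
  fun a b => ∃ x : ↥S, (x : X) ∈ B ∧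
    ((a = Sum.inl ↑x ∧ b = Sum.inr x) ∨ (a = Sum.inr x ∧ b = Sum.inl ↑x))

/-- The space `X ⨿_B S` obtained from `X ⊔ S` by identifying the two copies of each point
of `B ⊆ S ⊆ X`. -/
def Glue (X : Type*) (S B : Set X) : Type _ := Quot (glueRel S B)

instance {X : Type*} [TopologicalSpace X] (S B : Set X) : TopologicalSpace (Glue X S B) :=
  inferInstanceAs (TopologicalSpace (Quot _))

/-- The canonical inclusion `X → X ⨿_B S`. -/
def Glue.inl {X : Type*} {S B : Set X} (x : X) : Glue X S B := Quot.mk _ (Sum.inl x)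

/-- The inclusion of the extra copy `S → X ⨿_B S`. -/
def Glue.inr {X : Type*} {S B : Set X} (x : ↥S) : Glue X S B := Quot.mk _ (Sum.inr x)

/-- The extension `d_Y` of the domain map `d` to the graph `E_Y`. -/
def glueD {E0 E1 : Type*} [TopologicalSpace E0] (d : E1 → E0) (Y : Set E0) :
    Glue E1 (d ⁻¹' closure Y) (d ⁻¹' (closure Y \ Y)) → Glue E0 (closure Y) (closure Y \ Y) :=
  Quot.lift
    (Sum.elim (fun e => Glue.inl (d e)) (fun e => Glue.inr ⟨d e.1, e.2⟩))
    (by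
      rintro a b ⟨x, hx, (⟨rfl, rfl⟩ | ⟨rfl, rfl⟩)⟩
      · exact Quot.sound ⟨⟨d x.1, x.2⟩, hx, Or.inl ⟨rfl, rfl⟩⟩
      · exact (Quot.sound ⟨⟨d x.1, x.2⟩, hx, Or.inl ⟨rfl, rfl⟩⟩).symm)

/-- The extension `r_Y` of the range map `r` to the graph `E_Y`. -/
def glueR {E0 E1 : Type*} [TopologicalSpace E0] (d r : E1 → E0) (Y : Set E0) :
    Glue E1 (d ⁻¹' closure Y) (d ⁻¹' (closure Y \ Y)) → Glue E0 (closure Y) (closure Y \ Y) :=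
  Quot.lift (Sum.elim (fun e => Glue.inl (r e)) (fun e => Glue.inl (r e.1)))
    (by rintro a b ⟨x, hx, (⟨rfl, rfl⟩ | ⟨rfl, rfl⟩)⟩ <;> rfl)

/-- The projection from the glued space back onto the original space. -/
def glueProj {X : Type*} (S B : Set X) : Glue X S B → X :=
  Quot.lift (Sum.elim id Subtype.val)
    (by rintro a b ⟨x, hx, (⟨rfl, rfl⟩ | ⟨rfl, rfl⟩)⟩ <;> rfl)

/-- A point of the projective limit `E^i = Ẽ^i \ {∞}`: a compatible thread of points of the
one-point compactifications, not all equal to `∞`. -/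
structure LimPt {Λ : Type*} [Preorder Λ] (X : Λ → Type*)
    (m : ∀ ⦃l l' : Λ⦄, l ≤ l' → OnePoint (X l') → OnePoint (X l)) where
  pt : ∀ l, OnePoint (X l)
  compat : ∀ ⦃l l' : Λ⦄ (h : l ≤ l'), m h (pt l') = pt l
  exists_ne_infty : ∃ l, pt l ≠ ∞

instance {Λ : Type*} [Preorder Λ] (X : Λ → Type*) [∀ l, TopologicalSpace (X l)]
    (m : ∀ ⦃l l' : Λ⦄, l ≤ l' → OnePoint (X l') → OnePoint (X l)) :
    TopologicalSpace (LimPt X m) :=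
  TopologicalSpace.induced LimPt.pt inferInstance

/-- Topological freeness: the set of base points of loops without entrances has empty
interior. -/
def IsTopologicallyFree {E0 E1 : Type*} [TopologicalSpace E0] (d r : E1 → E0) : Prop :=
  interior {v : E0 | ∃ (n : ℕ) (hn : 0 < n) (e : Fin n → E1),
      (∀ k : Fin n, d (e k) = r (e ⟨(k.1 + 1) % n, Nat.mod_lt _ hn⟩)) ∧
      (∀ (k : Fin n) (e' : E1), r e' = r (e k) → e' = e k) ∧
      r (e ⟨0, hn⟩) = v} = ∅

open scoped Classical in
/-- Partial iteration of a partially defined map `σ` with domain `W`: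
`sgdsIter σ n x = some y` iff `x ∈ dom (σ^n)` and `σ^n x = y`. -/
noncomputable def sgdsIter {X : Type*} {W : Set X} (σ : ↥W → X) : ℕ → X → Option X
  | 0, x => Option.some x
  | n + 1, x => if h : x ∈ W then sgdsIter σ n (σ ⟨x, h⟩) else none


/-- Every point of `OnePoint X` other than `∞` is a coercion. -/
lemma eq_coe_of_ne_infty {Y : Type*} {o : OnePoint Y} (h : o ≠ ∞) : ∃ a : Y, o = ↑a := by
  cases o with
  | infty => exact absurd rfl h
  | coe a => exact ⟨a, rfl⟩

/-- Existence of threads in a projective limit of one-point compactifications: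
if a point `w` at level `μ` admits a preimage at every level above `μ`, then it extends
to a compatible thread. -/
lemma exists_thread {Λ : Type*} [Preorder Λ] [IsDirected Λ (· ≤ ·)] [Nonempty Λ]
    {X : Λ → Type*} [∀ l, TopologicalSpace (X l)] [∀ l, T2Space (X l)]
    [∀ l, LocallyCompactSpace (X l)]
    (p : ∀ ⦃l l' : Λ⦄, l ≤ l' → OnePoint (X l') → OnePoint (X l))
    (hpc : ∀ ⦃l l' : Λ⦄ (h : l ≤ l'), Continuous (p h))
    (hcomp : ∀ ⦃l l' l'' : Λ⦄ (h : l ≤ l') (h' : l' ≤ l'') (x : OnePoint (X l'')),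
      p h (p h' x) = p (h.trans h') x)
    (μ : Λ) (w : X μ)
    (H : ∀ ⦃l' : Λ⦄ (h : μ ≤ l'), ∃ z, p h z = (w : OnePoint (X μ))) :
    ∃ u : LimPt X p, u.pt μ = ↑w := by
  classical
  set C : Λ → Set (∀ l, OnePoint (X l)) :=
    fun lam => {x | x μ = ↑w} ∩ ⋂ (l) (h : l ≤ lam), {x | x l = p h (x lam)} with hC
  have hclosed : ∀ lam, IsClosed (C lam) := fun lam =>
    (isClosed_eq (continuous_apply μ) continuous_const).inter
      (isClosed_iInter fun l => isClosed_iInter fun h =>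
        isClosed_eq (continuous_apply l) ((hpc h).comp (continuous_apply lam)))
  have hcpt : ∀ lam, IsCompact (C lam) := fun lam => (hclosed lam).isCompact
  have hne : ∀ lam, (C lam).Nonempty := by
    intro lam
    obtain ⟨ν, hμν, hlamν⟩ := exists_ge_ge μ lam
    obtain ⟨z, hz⟩ := H hμν
    refine ⟨fun l => if h : l ≤ ν then p h z else ∞, ?_, ?_⟩
    · show (if h : μ ≤ ν then p h z else ∞) = ↑w
      rw [dif_pos hμν]; exact hz
    · refine Set.mem_iInter₂.2 fun l hl => ?_
      show (if h : l ≤ ν then p h z else ∞) = p hl (if h : lam ≤ ν then p h z else ∞)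
      rw [dif_pos (hl.trans hlamν), dif_pos hlamν, hcomp hl hlamν z]
  have hdir : Directed (· ⊇ ·) C := by
    intro a b
    obtain ⟨c, hac, hbc⟩ := exists_ge_ge a b
    have key : ∀ {a' : Λ}, a' ≤ c → C c ⊆ C a' := by
      intro a' ha'c x hx
      obtain ⟨hxμ, hxc⟩ := hx
      refine ⟨hxμ, Set.mem_iInter₂.2 fun l hl => ?_⟩
      have h1 : x l = p (hl.trans ha'c) (x c) := Set.mem_iInter₂.1 hxc l (hl.trans ha'c)
      have h2 : x a' = p ha'c (x c) := Set.mem_iInter₂.1 hxc a' ha'c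
      show x l = p hl (x a')
      rw [h1, h2, hcomp hl ha'c]
    exact ⟨c, key hac, key hbc⟩
  obtain ⟨x, hx⟩ := IsCompact.nonempty_iInter_of_directed_nonempty_isCompact_isClosed
    C hdir hne hcpt hclosed
  have hxmem : ∀ lam, x ∈ C lam := fun lam => Set.mem_iInter.1 hx lam
  have hxμ : x μ = ↑w := (hxmem μ).1
  refine ⟨⟨x, ?_, ⟨μ, ?_⟩⟩, hxμ⟩
  · intro l l' h
    exact (Set.mem_iInter₂.1 (hxmem l').2 l h).symm
  · rw [hxμ]; exact OnePoint.coe_ne_infty w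

/-- For a surjective regular projective system of topological graphs, every
regular vertex `v` of the projective limit has a coordinate `m_λ⁰(v)` which is a regular
vertex of `E_λ` for some `λ`. -/
theorem statement12
    {Λ : Type*} [Preorder Λ] [IsDirected Λ (· ≤ ·)] [Nonempty Λ]
    {V E : Λ → Type*}
    [∀ l, TopologicalSpace (V l)] [∀ l, TopologicalSpace (E l)]
    [∀ l, T2Space (V l)] [∀ l, T2Space (E l)]
    [∀ l, LocallyCompactSpace (V l)] [∀ l, LocallyCompactSpace (E l)]
    (d r : ∀ l, E l → V l)
    (hd : ∀ l, IsLocalHomeomorph (d l)) (hr : ∀ l, Continuous (r l))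
    (p0 : ∀ ⦃l l' : Λ⦄, l ≤ l' → OnePoint (V l') → OnePoint (V l))
    (p1 : ∀ ⦃l l' : Λ⦄, l ≤ l' → OnePoint (E l') → OnePoint (E l))
    (hfac : ∀ ⦃l l' : Λ⦄ (h : l ≤ l'), IsFactorMap (d l) (r l) (d l') (r l') (p0 h) (p1 h))
    (hreg : ∀ ⦃l l' : Λ⦄ (h : l ≤ l'), IsRegularFactorMap (r l) (r l') (p0 h) (p1 h))
    (hsurj : ∀ ⦃l l' : Λ⦄ (h : l ≤ l'), Function.Surjective (p0 h))
    (hid0 : ∀ (l : Λ) (h : l ≤ l) (x : OnePoint (V l)), p0 h x = x)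
    (hid1 : ∀ (l : Λ) (h : l ≤ l) (x : OnePoint (E l)), p1 h x = x)
    (hcomp0 : ∀ ⦃l l' l'' : Λ⦄ (h : l ≤ l') (h' : l' ≤ l'') (x : OnePoint (V l'')),
      p0 h (p0 h' x) = p0 (h.trans h') x)
    (hcomp1 : ∀ ⦃l l' l'' : Λ⦄ (h : l ≤ l') (h' : l' ≤ l'') (x : OnePoint (E l'')),
      p1 h (p1 h' x) = p1 (h.trans h') x)
    (dlim rlim : LimPt E p1 → LimPt V p0)
    (hdlim : ∀ (e : LimPt E p1) (l : Λ) (el : E l),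
      e.pt l = ↑el → (dlim e).pt l = ↑(d l el))
    (hrlim : ∀ (e : LimPt E p1) (l : Λ) (el : E l),
      e.pt l = ↑el → (rlim e).pt l = ↑(r l el)) :
    ∀ v : LimPt V p0, v ∈ graphRg rlim →
      ∃ (l : Λ) (w : V l), v.pt l = ↑w ∧ w ∈ graphRg (r l) := by
  classical
  intro v hv
  obtain ⟨hvfin, hvsce⟩ := hv
  obtain ⟨V', hV'nhds, hV'cpt⟩ := hvfin
  -- monotonicity of being a genuine (non-`∞`) coordinate
  have hmono0 : ∀ (u : LimPt V p0) {l l' : Λ} (h : l ≤ l'), u.pt l ≠ ∞ → u.pt l' ≠ ∞ := by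
    intro u l l' h hne heq
    exact hne (by rw [← u.compat h, heq, (hfac h).map_infty0])
  have hmono1 : ∀ (u : LimPt E p1) {l l' : Λ} (h : l ≤ l'), u.pt l ≠ ∞ → u.pt l' ≠ ∞ := by
    intro u l l' h hne heq
    exact hne (by rw [← u.compat h, heq, (hfac h).map_infty1])
  -- continuity of coordinate projections
  have hptcV : ∀ l : Λ, Continuous (fun u : LimPt V p0 => u.pt l) :=
    fun l => (continuous_apply l).comp continuous_induced_dom
  have hptcE : ∀ l : Λ, Continuous (fun u : LimPt E p1 => u.pt l) :=
    fun l => (continuous_apply l).comp continuous_induced_dom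
  -- the neighborhood `A` of `v`
  set A : Set (LimPt V p0) := V' ∩ (closure (graphSce rlim))ᶜ with hA
  have hA_mem : A ∈ nhds v :=
    inter_mem hV'nhds ((isClosed_closure.isOpen_compl).mem_nhds hvsce)
  rw [nhds_induced] at hA_mem
  obtain ⟨T, hT, hTA⟩ := Filter.mem_comap.1 hA_mem
  rw [nhds_pi] at hT
  obtain ⟨I, hIfin, t, ht, htT⟩ := Filter.mem_pi.1 hT
  -- a genuine coordinate of `v`
  obtain ⟨lam0, hlam0⟩ := v.exists_ne_infty
  -- the compact set `K₀` and a level over which all its edges are genuine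
  set K₀ : Set (LimPt E p1) := rlim ⁻¹' V' with hK₀def
  have hK₀ : IsCompact K₀ := hV'cpt
  have hUopen : ∀ l : Λ, IsOpen {e : LimPt E p1 | e.pt l ≠ ∞} := fun l =>
    (isClosed_singleton.isOpen_compl).preimage (hptcE l)
  have hcover : K₀ ⊆ ⋃ l, {e : LimPt E p1 | e.pt l ≠ ∞} := fun e _ =>
    Set.mem_iUnion.2 e.exists_ne_infty
  obtain ⟨J, hJ⟩ := hK₀.elim_finite_subcover _ hUopen hcover
  -- choose a single level `μ` dominating everything
  obtain ⟨μ, hμ⟩ := Finset.exists_le (hIfin.toFinset ∪ J ∪ {lam0})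
  have hleI : ∀ i ∈ I, i ≤ μ := fun i hi =>
    hμ i (Finset.mem_union_left _ (Finset.mem_union_left _ (hIfin.mem_toFinset.2 hi)))
  have hlam0μ : lam0 ≤ μ :=
    hμ lam0 (Finset.mem_union_right _ (Finset.mem_singleton_self _))
  have hJμ : ∀ j ∈ J, j ≤ μ := fun j hj =>
    hμ j (Finset.mem_union_left _ (Finset.mem_union_right _ hj))
  have hK₀μ : ∀ e ∈ K₀, e.pt μ ≠ ∞ := by
    intro e he
    obtain ⟨j, hjJ, hj⟩ := Set.mem_iUnion₂.1 (hJ he)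
    exact hmono1 e (hJμ j hjJ) hj
  obtain ⟨wμ, hwμ⟩ := eq_coe_of_ne_infty (hmono0 v hlam0μ hlam0)
  -- the basic open set `O'` at level `μ`
  set s : Λ → Set (OnePoint (V μ)) :=
    fun i => if hi : i ∈ I then (p0 (hleI i hi)) ⁻¹' (interior (t i)) else univ with hs
  set O' : Set (OnePoint (V μ)) := ⋂ i ∈ I, s i with hO'
  have hO'open : IsOpen O' := by
    refine hIfin.isOpen_biInter fun i hi => ?_
    rw [hs]; simp only [dif_pos hi]
    exact isOpen_interior.preimage (hfac (hleI i hi)).continuous_m0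
  have hkey : ∀ u : LimPt V p0, u.pt μ ∈ O' → u ∈ A := by
    intro u hu
    apply hTA
    refine htT (Set.mem_pi.2 fun i hi => ?_)
    have h1 : u.pt μ ∈ s i := Set.mem_iInter₂.1 hu i hi
    rw [hs] at h1; simp only [dif_pos hi] at h1
    have h2 : u.pt i ∈ interior (t i) := by
      rw [← u.compat (hleI i hi)]; exact h1
    exact interior_subset h2
  have hvO' : v.pt μ ∈ O' := by
    refine Set.mem_iInter₂.2 fun i hi => ?_
    rw [hs]; simp only [dif_pos hi]
    show p0 (hleI i hi) (v.pt μ) ∈ interior (t i)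
    rw [v.compat (hleI i hi)]
    exact mem_interior_iff_mem_nhds.2 (ht i)
  -- compact neighborhood `O` of `wμ` inside `O'`
  have hwO' : (wμ : OnePoint (V μ)) ∈ O' := hwμ ▸ hvO'
  obtain ⟨O, hOcpt, hwint, hOsub⟩ :=
    exists_compact_subset (hO'open.preimage OnePoint.continuous_coe) hwO'
  -- thread lifts
  have hliftV : ∀ x : V μ, ∃ u : LimPt V p0, u.pt μ = ↑x := by
    intro x
    exact exists_thread p0 (fun l l' h => (hfac h).continuous_m0) hcomp0 μ x
      (fun l' h => hsurj h ↑x)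
  have hliftE : ∀ e' : E μ, ∃ u : LimPt E p1, u.pt μ = ↑e' := by
    intro e'
    refine exists_thread p1 (fun l l' h => (hfac h).continuous_m1) hcomp1 μ e' ?_
    intro l' h
    obtain ⟨z, hz⟩ := hsurj h ↑(d μ e')
    have hzne : z ≠ ∞ := by
      rintro rfl
      rw [(hfac h).map_infty0] at hz
      exact OnePoint.infty_ne_coe _ hz
    obtain ⟨z', rfl⟩ := eq_coe_of_ne_infty hzne
    obtain ⟨eL, ⟨heL1, _⟩, _⟩ := (hfac h).lift e' z' hz.symm
    exact ⟨↑eL, heL1⟩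
  -- Claim (a): the interior of `O` is contained in the closure of the range of `r μ`
  have haint : ∀ u' ∈ interior O, u' ∈ closure (range (r μ)) := by
    intro u' hu'
    rw [mem_closure_iff]
    intro N hN hu'N
    obtain ⟨u, hu⟩ := hliftV u'
    have huO' : u.pt μ ∈ O' := by
      rw [hu]; exact hOsub (interior_subset hu')
    have huA : u ∈ A := hkey u huO'
    have hucl : u ∈ closure (range rlim) := by
      by_contra hcon
      exact huA.2 (subset_closure hcon)
    set N' : Set (V μ) := N ∩ interior O with hN'
    have hN'o : IsOpen ((fun u : LimPt V p0 => u.pt μ) ⁻¹' ((↑) '' N')) :=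
      (OnePoint.isOpenEmbedding_coe.isOpenMap _ (hN.inter isOpen_interior)).preimage (hptcV μ)
    have humem : u ∈ (fun u : LimPt V p0 => u.pt μ) ⁻¹' ((↑) '' N') :=
      ⟨u', ⟨hu'N, hu'⟩, hu.symm⟩
    obtain ⟨y, hy1, e, rfl⟩ := mem_closure_iff.1 hucl _ hN'o humem
    have h1 : (rlim e).pt μ ∈ (↑) '' N' := hy1
    obtain ⟨x, hxN', hxe⟩ := h1
    have h2 : rlim e ∈ A := by
      refine hkey _ ?_
      rw [← hxe]
      exact hOsub (interior_subset hxN'.2)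
    have heK : e ∈ K₀ := h2.1
    obtain ⟨e₁, he₁⟩ := eq_coe_of_ne_infty (hK₀μ e heK)
    have h3 : (rlim e).pt μ = ↑(r μ e₁) := hrlim e μ e₁ he₁
    have hxr : x = r μ e₁ := OnePoint.coe_injective (hxe.trans h3)
    exact ⟨r μ e₁, hxr ▸ hxN'.1, ⟨e₁, rfl⟩⟩
  -- `wμ` is not in the closure of the sources
  have hnsce : wμ ∉ closure (graphSce (r μ)) := by
    intro h
    obtain ⟨x, hx1, hx2⟩ := mem_closure_iff.1 h (interior O) isOpen_interior hwint
    exact hx2 (haint x hx1)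
  -- Claim (b): `r μ ⁻¹' O` is compact
  have hScpt : IsCompact (r μ ⁻¹' O) := by
    rw [isCompact_iff_ultrafilter_le_nhds]
    intro f hf
    have hSf : r μ ⁻¹' O ∈ f := le_principal_iff.1 hf
    choose g hg using hliftE
    have hgK : ∀ e' ∈ r μ ⁻¹' O, g e' ∈ K₀ := by
      intro e' he'
      have h1 : (rlim (g e')).pt μ = ↑(r μ e') := hrlim _ _ _ (hg e')
      have h2 : (rlim (g e')).pt μ ∈ O' := by
        rw [h1]; exact hOsub he'
      exact (hkey (rlim (g e')) h2).1
    have h𝒰 : ↑(f.map g) ≤ Filter.principal K₀ := by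
      rw [le_principal_iff]
      exact Filter.mem_map.2 (Filter.mem_of_superset hSf hgK)
    obtain ⟨ehat, hehatK, hehatlim⟩ := hK₀.ultrafilter_le_nhds (f.map g) h𝒰
    obtain ⟨e₀, he₀⟩ := eq_coe_of_ne_infty (hK₀μ ehat hehatK)
    have hTg : Tendsto g ↑f (nhds ehat) := by
      rw [Tendsto, ← Ultrafilter.coe_map]
      exact hehatlim
    have h3 : Tendsto ((fun u : LimPt E p1 => u.pt μ) ∘ g) ↑f (nhds (ehat.pt μ)) :=
      ((hptcE μ).tendsto ehat).comp hTg
    have hfun : ((fun u : LimPt E p1 => u.pt μ) ∘ g) =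
        (fun e' : E μ => (↑e' : OnePoint (E μ))) := funext fun e' => hg e'
    rw [hfun, he₀, OnePoint.nhds_coe_eq] at h3
    have hfe₀ : ↑f ≤ nhds e₀ := (Filter.map_le_map_iff OnePoint.coe_injective).1 h3
    have htend : Tendsto (r μ) ↑f (nhds (r μ e₀)) := ((hr μ).tendsto e₀).mono_left hfe₀
    have hev : ∀ᶠ x in (↑f : Filter (E μ)), r μ x ∈ O := hSf
    have he₀O : r μ e₀ ∈ O := hOcpt.isClosed.mem_of_tendsto htend hev
    exact ⟨e₀, he₀O, hfe₀⟩
  refine ⟨μ, wμ, hwμ, ⟨O, mem_interior_iff_mem_nhds.1 hwint, hScpt⟩, hnsce⟩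

end TopGraphAux
end

section
/- Let F = (F^0, F^1, d_F, r_F) be a subgraph of a topological graph E = (E^0, E^1, d, r). Then (F^0 ∩ E^0_rg) \ closure(r(E^1 \ F^1)) = F^0_rg \ closure(r(E^1 \ F^1)), where the closures are taken in E^0, E^0_rg is computed in E, and F^0_rg is computed in the topological graph F. -/
open Set Filter OnePoint

namespace TopGraphAux

/-- If `v ∈ closure s`, `v` lies in an open set `u`, and `s ∩ u ⊆ t`,
then `v ∈ closure t`. -/
lemma mem_closure_mono_on {X : Type*} [TopologicalSpace X] {v : X} {s t u : Set X}
    (hv : v ∈ closure s) (hvu : v ∈ u) (hu : IsOpen u) (hst : s ∩ u ⊆ t) :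
    v ∈ closure t := by
  rw [mem_closure_iff] at hv ⊢
  intro o ho hvo
  obtain ⟨x, hxo, hxs⟩ := hv (o ∩ u) (ho.inter hu) ⟨hvo, hvu⟩
  exact ⟨x, hxo.1, hst ⟨hxs, hxo.2⟩⟩

/-- For a subgraph `F` of a topological graph `E`,
`(F⁰ ∩ E⁰_rg) \ closure(r(E¹ \ F¹)) = F⁰_rg \ closure(r(E¹ \ F¹))`, where `F⁰_rg` is
computed in the topological graph `F`. -/
theorem statement13
    {E0 E1 : Type*} [TopologicalSpace E0] [TopologicalSpace E1]
    [T2Space E0] [T2Space E1] [LocallyCompactSpace E0] [LocallyCompactSpace E1]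
    (d r : E1 → E0) (hd : IsLocalHomeomorph d) (hr : Continuous r)
    (F0 : Set E0) (F1 : Set E1) (hF0 : IsOpen F0) (hF1 : IsOpen F1)
    (hdF : Set.MapsTo d F1 F0) (hrF : Set.MapsTo r F1 F0) :
    (F0 ∩ graphRg r) \ closure (r '' F1ᶜ)
      = (Subtype.val '' graphRg (Set.MapsTo.restrict r F1 F0 hrF)) \ closure (r '' F1ᶜ) := by
  classical
  set rF := Set.MapsTo.restrict r F1 F0 hrF with hrFdef
  set C := closure (r '' F1ᶜ) with hC
  set U := F0 ∩ Cᶜ with hU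
  have hUopen : IsOpen U := hF0.inter isClosed_closure.isOpen_compl
  -- key: edges with range outside `C` are in `F1`
  have keyA : ∀ e : E1, r e ∉ C → e ∈ F1 := by
    intro e he
    by_contra h
    exact he (subset_closure ⟨e, h, rfl⟩)
  -- image of the range of rF
  have hvalrange : Subtype.val '' Set.range rF = r '' F1 := by
    ext x
    constructor
    · rintro ⟨y, ⟨e, rfl⟩, rfl⟩; exact ⟨e.1, e.2, rfl⟩
    · rintro ⟨e, he, rfl⟩; exact ⟨rF ⟨e, he⟩, ⟨⟨e, he⟩, rfl⟩, rfl⟩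
  -- membership in graphSce rF
  have hsceF : ∀ (x : F0), x ∈ graphSce rF ↔ (x : E0) ∉ closure (r '' F1) := by
    intro x
    rw [graphSce, Set.mem_compl_iff, closure_subtype, hvalrange]
  have hSF : Subtype.val '' graphSce rF = F0 ∩ (closure (r '' F1))ᶜ := by
    ext x
    constructor
    · rintro ⟨y, hy, rfl⟩; exact ⟨y.2, (hsceF y).1 hy⟩
    · rintro ⟨hx0, hx⟩; exact ⟨⟨x, hx0⟩, (hsceF ⟨x, hx0⟩).2 hx, rfl⟩
  -- range r splits
  have hrangesplit : closure (Set.range r) ⊆ closure (r '' F1) ∪ C := by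
    rw [← closure_union]
    apply closure_mono
    rintro x ⟨e, rfl⟩
    by_cases he : e ∈ F1
    · exact Or.inl ⟨e, he, rfl⟩
    · exact Or.inr ⟨e, he, rfl⟩
  ext v
  simp only [Set.mem_diff, Set.mem_inter_iff]
  constructor
  · rintro ⟨⟨hvF0, hvfin, hvnsce⟩, hvC⟩
    have hvU : v ∈ U := ⟨hvF0, hvC⟩
    refine ⟨⟨⟨v, hvF0⟩, ⟨?_, ?_⟩, rfl⟩, hvC⟩
    · -- graphFin rF
      obtain ⟨V, hV, hVc⟩ := hvfin
      obtain ⟨K, hK, hKsub, hKc⟩ := local_compact_nhds (Filter.inter_mem hV (hUopen.mem_nhds hvU))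
      refine ⟨Subtype.val ⁻¹' K, continuous_subtype_val.continuousAt.preimage_mem_nhds hK, ?_⟩
      rw [Subtype.isCompact_iff]
      have himg : Subtype.val '' (rF ⁻¹' (Subtype.val ⁻¹' K)) = r ⁻¹' K := by
        ext e
        constructor
        · rintro ⟨f, hf, rfl⟩; exact hf
        · intro he
          have heF1 : e ∈ F1 := keyA e fun h => (hKsub he).2.2 h
          exact ⟨⟨e, heF1⟩, he, rfl⟩
      rw [himg]
      exact hVc.of_isClosed_subset (hKc.isClosed.preimage hr)
        fun e he => (hKsub he).1
    · -- not in closure of graphSce rF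
      intro hcl
      rw [closure_subtype] at hcl
      apply hvnsce
      refine mem_closure_mono_on hcl hvU hUopen ?_
      rw [hSF]
      rintro x ⟨⟨hx0, hx1⟩, _, hxC⟩
      exact fun h => (hrangesplit h).elim hx1 hxC
  · rintro ⟨⟨⟨w, hwF0⟩, ⟨hwfin, hwnsce⟩, rfl⟩, hvC⟩
    have hvU : w ∈ U := ⟨hwF0, hvC⟩
    refine ⟨⟨hwF0, ?_, ?_⟩, hvC⟩
    · -- graphFin r
      obtain ⟨V, hV, hVc⟩ := hwfin
      rw [nhds_subtype_eq_comap, Filter.mem_comap] at hV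
      obtain ⟨W, hW, hWsub⟩ := hV
      obtain ⟨K, hK, hKsub, hKc⟩ := local_compact_nhds (Filter.inter_mem hW (hUopen.mem_nhds hvU))
      refine ⟨K, hK, ?_⟩
      have him : IsCompact (Subtype.val '' (rF ⁻¹' V)) := Subtype.isCompact_iff.1 hVc
      refine him.of_isClosed_subset (hKc.isClosed.preimage hr) ?_
      intro e he
      have heF1 : e ∈ F1 := keyA e fun h => (hKsub he).2.2 h
      refine ⟨⟨e, heF1⟩, hWsub ?_, rfl⟩
      exact (hKsub he).1
    · -- not in closure of graphSce r
      intro hcl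
      apply hwnsce
      rw [closure_subtype]
      refine mem_closure_mono_on hcl hvU hUopen ?_
      rw [hSF]
      rintro x ⟨hx, hx0, hxC⟩
      exact ⟨hx0, fun h => hx (closure_mono (Set.image_subset_range r F1) h)⟩

end TopGraphAux
end

section
/- Let E = (E^0, E^1, d, r) be a topological graph and V ⊆ E^0 an open subset. Set F_V^0 = V ∪ d(r^{-1}(V)) and F_V^1 = r^{-1}(V), and let d_V, r_V be the restrictions of d, r to F_V^1. Then F_V = (F_V^0, F_V^1, d_V, r_V) is a subgraph of E, and (F_V^0)_rg = V ∩ E^0_rg, where (F_V^0)_rg is computed in the topological graph F_V. -/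
open Set Filter OnePoint

namespace TopGraphAux

section Aux

variable {E0 E1 : Type*} [TopologicalSpace E0] [TopologicalSpace E1]

/-- If two sets agree on an open set `V`, points of `V` in the closure of one are in the
closure of the other. -/
lemma aux_inter_closure {V A B : Set E0} (hV : IsOpen V) (h : V ∩ A = V ∩ B) :
    V ∩ closure A ⊆ closure B := fun _x hx =>
  closure_mono Set.inter_subset_right (h ▸ hV.inter_closure hx)

end Aux

/-- For an open subset `V ⊆ E⁰`, the quadruple
`F_V = (V ∪ d(r⁻¹(V)), r⁻¹(V), d|, r|)` is a subgraph of `E` and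
`(F_V⁰)_rg = V ∩ E⁰_rg`. -/
theorem statement14
    {E0 E1 : Type*} [TopologicalSpace E0] [TopologicalSpace E1]
    [T2Space E0] [T2Space E1] [LocallyCompactSpace E0] [LocallyCompactSpace E1]
    (d r : E1 → E0) (hd : IsLocalHomeomorph d) (hr : Continuous r)
    (V : Set E0) (hV : IsOpen V) :
    IsOpen (V ∪ d '' (r ⁻¹' V)) ∧
      IsOpen (r ⁻¹' V) ∧
      Set.MapsTo d (r ⁻¹' V) (V ∪ d '' (r ⁻¹' V)) ∧
      Set.MapsTo r (r ⁻¹' V) (V ∪ d '' (r ⁻¹' V)) ∧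
      Subtype.val '' graphRg
          (Set.MapsTo.restrict r (r ⁻¹' V) (V ∪ d '' (r ⁻¹' V))
            (fun e he => Set.mem_union_left _ he))
        = V ∩ graphRg r := by
  classical
  have hF1 : IsOpen (r ⁻¹' V) := hV.preimage hr
  have hF0 : IsOpen (V ∪ d '' (r ⁻¹' V)) := hV.union (hd.isOpenMap _ hF1)
  refine ⟨hF0, hF1, fun e he => Or.inr ⟨e, he, rfl⟩, fun e he => Or.inl he, ?_⟩
  set F0 : Set E0 := V ∪ d '' (r ⁻¹' V) with hF0def
  set F1 : Set E1 := r ⁻¹' V with hF1def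
  set rF : ↥F1 → ↥F0 := Set.MapsTo.restrict r F1 F0 (fun e he => Set.mem_union_left _ he)
    with hrFdef
  have hVsub : V ⊆ F0 := Set.subset_union_left
  -- the image of the range of `rF`
  have hrange : Subtype.val '' (Set.range rF) = V ∩ Set.range r := by
    ext x
    simp only [Set.mem_image, Set.mem_range, Set.mem_inter_iff]
    constructor
    · rintro ⟨y, ⟨e, rfl⟩, rfl⟩
      exact ⟨e.2, e, rfl⟩
    · rintro ⟨hxV, e, rfl⟩
      exact ⟨rF ⟨e, hxV⟩, ⟨_, rfl⟩, rfl⟩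
  -- the sources of `F`
  have hsceF : graphSce rF = Subtype.val ⁻¹' (closure (V ∩ Set.range r))ᶜ := by
    ext x
    simp only [graphSce, Set.mem_compl_iff, Set.mem_preimage]
    rw [closure_subtype, hrange]
  have hsceF_img : Subtype.val '' graphSce rF = F0 ∩ (closure (V ∩ Set.range r))ᶜ := by
    rw [hsceF, Subtype.image_preimage_coe]
  -- within `V`, sources of `F` and of `E` agree
  have hC : V ∩ (closure (V ∩ Set.range r))ᶜ = V ∩ (closure (Set.range r))ᶜ := by
    ext x
    simp only [Set.mem_inter_iff, Set.mem_compl_iff]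
    refine and_congr_right fun hxV => not_congr ?_
    exact ⟨fun h => closure_mono Set.inter_subset_right h, fun h => hV.inter_closure ⟨hxV, h⟩⟩
  have hsce_eq : V ∩ (Subtype.val '' graphSce rF) = V ∩ graphSce r := by
    rw [hsceF_img, ← Set.inter_assoc, Set.inter_eq_self_of_subset_left hVsub, hC]
    rfl
  have hclosV : ∀ {x : E0}, x ∈ V →
      (x ∈ closure (Subtype.val '' graphSce rF) ↔ x ∈ closure (graphSce r)) := by
    intro x hx
    exact ⟨fun h => aux_inter_closure hV hsce_eq ⟨hx, h⟩,
      fun h => aux_inter_closure hV hsce_eq.symm ⟨hx, h⟩⟩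
  -- finiteness transfers from `F` to `E` at points of `V`
  have hfinE_of_F : ∀ (v : E0) (hv0 : v ∈ F0), (⟨v, hv0⟩ : ↥F0) ∈ graphFin rF → v ∈ V →
      v ∈ graphFin r := by
    intro v hv0 hfin hvV
    obtain ⟨W, hW, hWc⟩ := hfin
    have hWv : Subtype.val '' W ∈ nhds v := by
      rw [← hF0.isOpenEmbedding_subtypeVal.map_nhds_eq (⟨v, hv0⟩ : ↥F0)]
      exact Filter.image_mem_map hW
    refine ⟨Subtype.val '' W ∩ V, Filter.inter_mem hWv (hV.mem_nhds hvV), ?_⟩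
    have him : r ⁻¹' (Subtype.val '' W ∩ V) = Subtype.val '' (rF ⁻¹' W) := by
      ext e
      simp only [Set.mem_preimage, Set.mem_inter_iff, Set.mem_image]
      constructor
      · rintro ⟨⟨y, hy, hye⟩, heV⟩
        refine ⟨⟨e, heV⟩, ?_, rfl⟩
        have h2 : rF ⟨e, heV⟩ = y := Subtype.ext hye.symm
        show rF ⟨e, heV⟩ ∈ W
        rw [h2]
        exact hy
      · rintro ⟨e', he', rfl⟩
        exact ⟨⟨rF e', he', rfl⟩, e'.2⟩
    rw [him]
    exact hWc.image continuous_subtype_val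
  -- finiteness transfers from `E` to `F` at points of `V`
  have hfinF_of_E : ∀ (v : E0) (hv0 : v ∈ F0), v ∈ V → v ∈ graphFin r →
      (⟨v, hv0⟩ : ↥F0) ∈ graphFin rF := by
    intro v hv0 hvV hfin
    obtain ⟨W, hW, hWc⟩ := hfin
    obtain ⟨K, hKmem, hKsub, hKc⟩ := local_compact_nhds (Filter.inter_mem hW (hV.mem_nhds hvV))
    refine ⟨Subtype.val ⁻¹' K, continuous_subtype_val.continuousAt.preimage_mem_nhds hKmem, ?_⟩
    rw [Subtype.isCompact_iff]
    have him : Subtype.val '' (rF ⁻¹' (Subtype.val ⁻¹' K)) = r ⁻¹' K := by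
      ext e
      simp only [Set.mem_image, Set.mem_preimage]
      constructor
      · rintro ⟨e', he', rfl⟩
        exact he'
      · intro he
        exact ⟨⟨e, (hKsub he).2⟩, he, rfl⟩
    rw [him]
    exact hWc.of_isClosed_subset (hKc.isClosed.preimage hr) fun e he => (hKsub he).1
  -- every regular vertex of `F` lies in `V`
  have hsubV : ∀ x : ↥F0, x ∈ graphRg rF → (x : E0) ∈ V := by
    intro x hx
    obtain ⟨⟨W, hW, hWc⟩, hncl⟩ := hx
    have hU0 : (closure (graphSce rF))ᶜ ∈ nhds x :=
      (isClosed_closure.isOpen_compl).mem_nhds hncl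
    obtain ⟨W', hW'sub, hW'open, hxW'⟩ := mem_nhds_iff.mp (Filter.inter_mem hW hU0)
    set O : Set E0 := Subtype.val '' W' with hOdef
    have hOopen : IsOpen O := hF0.isOpenEmbedding_subtypeVal.isOpenMap _ hW'open
    set K' : Set E0 := r '' (Subtype.val '' (rF ⁻¹' W)) with hK'def
    have hK'c : IsCompact K' := (hWc.image continuous_subtype_val).image hr
    have hK'V : K' ⊆ V := by
      rintro _ ⟨_, ⟨e, _, rfl⟩, rfl⟩
      exact e.2
    have hOK' : O ⊆ K' := by
      rintro y ⟨x', hx', rfl⟩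
      have h1 : (x' : E0) ∈ closure (V ∩ Set.range r) := by
        have hx'cl : x' ∈ closure (Set.range rF) := by
          by_contra hcon
          exact (hW'sub hx').2 (subset_closure hcon)
        rw [closure_subtype, hrange] at hx'cl
        exact hx'cl
      have h2 : (x' : E0) ∈ closure (O ∩ (V ∩ Set.range r)) :=
        hOopen.inter_closure ⟨⟨x', hx', rfl⟩, h1⟩
      have h3 : O ∩ (V ∩ Set.range r) ⊆ K' := by
        rintro z ⟨⟨x'', hx'', hz⟩, hzV, e, rfl⟩
        have heF1 : e ∈ F1 := hzV
        have : rF ⟨e, heF1⟩ = x'' := Subtype.ext hz.symm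
        refine ⟨e, ⟨⟨e, heF1⟩, ?_, rfl⟩, rfl⟩
        show rF ⟨e, heF1⟩ ∈ W
        rw [this]
        exact (hW'sub hx'').1
      exact closure_minimal h3 hK'c.isClosed h2
    exact hK'V (hOK' ⟨x, hxW', rfl⟩)
  -- conclude
  ext v
  simp only [Set.mem_image, Set.mem_inter_iff]
  constructor
  · rintro ⟨x, hx, rfl⟩
    have hvV : (x : E0) ∈ V := hsubV x hx
    obtain ⟨hfin, hncl⟩ := hx
    refine ⟨hvV, hfinE_of_F _ x.2 hfin hvV, fun hcl => hncl ?_⟩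
    rw [closure_subtype]
    exact (hclosV hvV).mpr hcl
  · rintro ⟨hvV, hfin, hncl⟩
    have hv0 : v ∈ F0 := Or.inl hvV
    refine ⟨⟨v, hv0⟩, ⟨hfinF_of_E v hv0 hvV hfin, fun hcl => hncl ?_⟩, rfl⟩
    rw [closure_subtype] at hcl
    exact (hclosV hvV).mp hcl


end TopGraphAux
end

section
/- Let E = (E^0, E^1, d, r) be a topological graph and let Ẽ = (Ẽ^0, E^1, d, r) be its one-point compactification, where Ẽ^0 = E^0 ∪ {∞} is the one-point compactification of E^0 and d, r are viewed as maps E^1 → Ẽ^0. Then Ẽ^0_rg = E^0_rg, where both sides are regarded as subsets of Ẽ^0 via the embedding E^0 ⊆ Ẽ^0. -/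
open Set Filter OnePoint

namespace TopGraphAux

/-- For the one-point compactification `Ẽ = (Ẽ⁰, E¹, d, r)` of a
topological graph `E`, one has `Ẽ⁰_rg = E⁰_rg` (as subsets of `Ẽ⁰`). -/
theorem statement16
    {E0 E1 : Type*} [TopologicalSpace E0] [TopologicalSpace E1]
    [T2Space E0] [T2Space E1] [LocallyCompactSpace E0] [LocallyCompactSpace E1]
    (d r : E1 → E0) (hd : IsLocalHomeomorph d) (hr : Continuous r) :
    graphRg (fun e : E1 => (↑(r e) : OnePoint E0))
      = (fun v : E0 => (↑v : OnePoint E0)) '' graphRg r := by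
  set rt : E1 → OnePoint E0 := fun e => (↑(r e) : OnePoint E0) with hrt
  have he : Topology.IsOpenEmbedding ((↑) : E0 → OnePoint E0) := OnePoint.isOpenEmbedding_coe
  -- preimage of sce
  have hsce : ((↑) : E0 → OnePoint E0) ⁻¹' graphSce rt = graphSce r := by
    have hrng : Set.range rt = ((↑) : E0 → OnePoint E0) '' Set.range r := by
      ext y; simp [rt]
    rw [graphSce, graphSce, Set.preimage_compl, hrng,
      ← he.isEmbedding.closure_eq_preimage_closure_image _]
  -- closure of sce membership
  have hclos : ∀ v : E0, (↑v : OnePoint E0) ∈ closure (graphSce rt) ↔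
      v ∈ closure (graphSce r) := by
    intro v
    rw [mem_closure_iff_nhds, mem_closure_iff_nhds]
    constructor
    · intro h U hU
      obtain ⟨y, hy1, hy2⟩ := h _ (he.isOpenMap.image_mem_nhds hU)
      obtain ⟨x, hx, rfl⟩ := hy1
      exact ⟨x, hx, by rwa [← hsce]⟩
    · intro h U hU
      obtain ⟨x, hx1, hx2⟩ := h _ (he.continuous.continuousAt.preimage_mem_nhds hU)
      refine ⟨↑x, hx1, ?_⟩
      rw [← hsce] at hx2
      exact hx2
  -- fin membership
  have hfin : ∀ v : E0, (↑v : OnePoint E0) ∈ graphFin rt ↔ v ∈ graphFin r := by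
    intro v
    constructor
    · rintro ⟨V, hV, hc⟩
      exact ⟨((↑) : E0 → OnePoint E0) ⁻¹' V,
        he.continuous.continuousAt.preimage_mem_nhds hV, hc⟩
    · rintro ⟨V, hV, hc⟩
      refine ⟨((↑) : E0 → OnePoint E0) '' V, he.isOpenMap.image_mem_nhds hV, ?_⟩
      have : rt ⁻¹' (((↑) : E0 → OnePoint E0) '' V) = r ⁻¹' V := by
        ext e
        simp [rt, he.injective.mem_set_image]
      rwa [this]
  -- infinity is not regular
  have hinf : (∞ : OnePoint E0) ∉ graphRg rt := by
    rintro ⟨⟨V, hV, hc⟩, hncl⟩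
    obtain ⟨s, ⟨hscl, hsc⟩, hsub⟩ := (OnePoint.hasBasis_nhds_infty.mem_iff).mp hV
    have hrange : Set.range r ⊆ s ∪ r '' (rt ⁻¹' V) := by
      rintro _ ⟨e, rfl⟩
      by_cases hrs : r e ∈ s
      · exact Or.inl hrs
      · exact Or.inr ⟨e, hsub (Or.inl ⟨r e, hrs, rfl⟩), rfl⟩
    have hC : IsCompact (s ∪ r '' (rt ⁻¹' V)) := hsc.union (hc.image hr)
    have hclosed : IsClosed (((↑) : E0 → OnePoint E0) '' (s ∪ r '' (rt ⁻¹' V))) :=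
      (hC.image he.continuous).isClosed
    have : (∞ : OnePoint E0) ∈ graphSce rt := by
      intro hmem
      have hsub2 : closure (Set.range rt) ⊆
          ((↑) : E0 → OnePoint E0) '' (s ∪ r '' (rt ⁻¹' V)) := by
        apply closure_minimal _ hclosed
        rintro _ ⟨e, rfl⟩
        exact ⟨r e, hrange ⟨e, rfl⟩, rfl⟩
      obtain ⟨x, -, hx⟩ := hsub2 hmem
      exact OnePoint.coe_ne_infty x hx
    exact hncl (subset_closure this)
  ext x
  induction x using OnePoint.rec with
  | infty =>
    simp only [mem_image]
    constructor
    · intro h; exact absurd h hinf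
    · rintro ⟨v, -, hv⟩; exact absurd hv (OnePoint.coe_ne_infty v)
  | coe v =>
    constructor
    · rintro ⟨h1, h2⟩
      exact ⟨v, ⟨(hfin v).mp h1, fun h => h2 ((hclos v).mpr h)⟩, rfl⟩
    · rintro ⟨w, ⟨h1, h2⟩, hw⟩
      obtain rfl : w = v := OnePoint.coe_injective hw
      exact ⟨(hfin w).mpr h1, fun h => h2 ((hclos w).mp h)⟩


end TopGraphAux
end

section
/- Let (X, σ) be a singly generated dynamical system and let E be its associated topological graph (E^0 = X, E^1 = dom(σ), d = σ, r : dom(σ) → X the inclusion). Then E is topologically free if and only if for every positive integer n the set {x ∈ dom(σ^n) : σ^n(x) = x} has empty interior in X, where dom(σ^n) = {x ∈ X : σ^k(x) ∈ dom(σ) for all 0 ≤ k ≤ n−1}. -/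
open Set Filter OnePoint

namespace TopGraphAux

/-! Since `r` is the inclusion, no loop has an entrance, and `x` is the base point of a loop of
length `n` exactly when `x ∈ dom(σⁿ)` and `σⁿ x = x`; so the base points of loops form
`⋃ₙ Fix(σⁿ)`, and one direction is monotonicity of the interior. Conversely, if this union
contains a nonempty open set `V`, the Baire category theorem in the locally compact Hausdorff
space `X` yields `n` such that `closure Fix(σⁿ)` contains a nonempty open `U ⊆ V`. Every point
of `V` is periodic, hence lies in `dom(σᵐ)` for all `m`, and `Fix(σⁿ)` is closed in `dom(σⁿ)`
because `σⁿ` is continuous there; so `U ⊆ Fix(σⁿ)`. -/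

theorem exists_nonempty_interior_closure_of_subset_iUnion {X ι : Type*} [TopologicalSpace X]
    [BaireSpace X] [Countable ι] {V : Set X} (hV : IsOpen V) (hne : V.Nonempty) {F : ι → Set X}
    (hcover : V ⊆ ⋃ i, F i) : ∃ i, (interior (closure (F i))).Nonempty := by
  by_contra! h
  exact not_isMeagre_of_isOpen hV hne
    ((isMeagre_iUnion fun i => IsNowhereDense.isMeagre (h i)).mono hcover)

def loopBases {E0 E1 : Type*} (d r : E1 → E0) : Set E0 :=
  {v : E0 | ∃ (n : ℕ) (hn : 0 < n) (e : Fin n → E1),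
      (∀ k : Fin n, d (e k) = r (e ⟨(k.1 + 1) % n, Nat.mod_lt _ hn⟩)) ∧
      (∀ (k : Fin n) (e' : E1), r e' = r (e k) → e' = e k) ∧
      r (e ⟨0, hn⟩) = v}

theorem isTopologicallyFree_iff {E0 E1 : Type*} [TopologicalSpace E0] (d r : E1 → E0) :
    IsTopologicallyFree d r ↔ interior (loopBases d r) = ∅ :=
  Iff.rfl

section SGDS

variable {X : Type*} {W : Set X} (σ : ↥W → X)

open scoped Classical in
/-- `σ` extended by the identity off `W`: its iterates compute `σⁿ` on `dom(σⁿ)`, but it has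
spurious fixed points outside `W`. -/
noncomputable def sgdsExt : X → X := fun x => if h : x ∈ W then σ ⟨x, h⟩ else x

def sgdsDom (n : ℕ) : Set X := {x | ∀ k < n, (sgdsExt σ)^[k] x ∈ W}

def sgdsFixedPts (n : ℕ) : Set X := {x | sgdsIter σ n x = Option.some x}

theorem sgdsExt_of_mem (x : ↥W) : sgdsExt σ x = σ x := dif_pos x.2

theorem sgdsIter_succ_of_mem {x : X} (hx : x ∈ W) (n : ℕ) :
    sgdsIter σ (n + 1) x = sgdsIter σ n (sgdsExt σ x) := by
  simp only [sgdsIter, dif_pos hx, sgdsExt_of_mem σ ⟨x, hx⟩]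

theorem sgdsIter_succ_of_notMem {x : X} (hx : x ∉ W) (n : ℕ) : sgdsIter σ (n + 1) x = none := by
  simp only [sgdsIter, dif_neg hx]

theorem mem_sgdsDom_succ {n : ℕ} {x : X} :
    x ∈ sgdsDom σ (n + 1) ↔ x ∈ W ∧ sgdsExt σ x ∈ sgdsDom σ n := by
  simp only [sgdsDom, mem_ofPred_eq, Nat.forall_lt_succ_left, Function.iterate_zero_apply,
    Function.iterate_succ_apply]

theorem sgdsIter_eq_some_iff {n : ℕ} {x y : X} :
    sgdsIter σ n x = Option.some y ↔ x ∈ sgdsDom σ n ∧ (sgdsExt σ)^[n] x = y := by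
  induction n generalizing x with
  | zero => simp [sgdsIter, sgdsDom]
  | succ n ih =>
    by_cases hx : x ∈ W
    · rw [sgdsIter_succ_of_mem σ hx, ih, mem_sgdsDom_succ, Function.iterate_succ_apply]
      exact ⟨fun h => ⟨⟨hx, h.1⟩, h.2⟩, fun h => ⟨h.1.2, h.2⟩⟩
    · simp [sgdsIter_succ_of_notMem σ hx, mem_sgdsDom_succ, hx]

theorem mem_sgdsFixedPts_iff {n : ℕ} {x : X} :
    x ∈ sgdsFixedPts σ n ↔ x ∈ sgdsDom σ n ∧ Function.IsPeriodicPt (sgdsExt σ) n x :=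
  sgdsIter_eq_some_iff σ

theorem mem_sgdsDom_of_mem_sgdsFixedPts {n : ℕ} (hn : 0 < n) {x : X}
    (hx : x ∈ sgdsFixedPts σ n) (m : ℕ) : x ∈ sgdsDom σ m := by
  rw [mem_sgdsFixedPts_iff] at hx
  intro k _
  rw [← hx.2.iterate_mod_apply]
  exact hx.1 _ (Nat.mod_lt _ hn)

theorem loopBases_eq_setOf_mem_sgdsFixedPts :
    loopBases σ (Subtype.val : ↥W → X) = {x | ∃ n, 0 < n ∧ x ∈ sgdsFixedPts σ n} := by
  ext v
  constructor
  · rintro ⟨n, hn, e, hloop, -, rfl⟩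
    have horbit : ∀ k, (sgdsExt σ)^[k] (e ⟨0, hn⟩) = e ⟨k % n, Nat.mod_lt _ hn⟩ := by
      intro k
      induction k with
      | zero => simp
      | succ k ih =>
        rw [Function.iterate_succ_apply', ih, sgdsExt_of_mem, hloop]
        simp only [Nat.mod_add_mod]
    refine ⟨n, hn, (mem_sgdsFixedPts_iff σ).2 ⟨fun k _ => ?_, ?_⟩⟩
    · rw [horbit]; exact Subtype.prop _
    · rw [Function.IsPeriodicPt, Function.IsFixedPt, horbit]
      simp only [Nat.mod_self]
  · rintro ⟨n, hn, hv⟩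
    have hW : ∀ k, (sgdsExt σ)^[k] v ∈ W := fun k =>
      mem_sgdsDom_of_mem_sgdsFixedPts σ hn hv (k + 1) k k.lt_succ_self
    have hper := ((mem_sgdsFixedPts_iff σ).1 hv).2
    refine ⟨n, hn, fun k => ⟨_, hW k⟩, fun k => ?_, fun k e' h => Subtype.ext h, rfl⟩
    rw [← sgdsExt_of_mem σ ⟨_, hW k⟩]
    simp only [← Function.iterate_succ_apply' (sgdsExt σ), hper.iterate_mod_apply]

variable [TopologicalSpace X]

theorem continuousOn_sgdsExt (hσ : Continuous σ) : ContinuousOn (sgdsExt σ) W := by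
  rw [continuousOn_iff_continuous_domRestrict]
  exact hσ.congr fun x => (sgdsExt_of_mem σ x).symm

theorem continuousOn_sgdsExt_iterate (hσ : Continuous σ) (n : ℕ) :
    ContinuousOn (sgdsExt σ)^[n] (sgdsDom σ n) := by
  induction n with
  | zero => exact continuousOn_id
  | succ n ih =>
    rw [Function.iterate_succ]
    exact ih.comp ((continuousOn_sgdsExt σ hσ).mono fun x hx => ((mem_sgdsDom_succ σ).1 hx).1)
      fun x hx => ((mem_sgdsDom_succ σ).1 hx).2

theorem closure_sgdsFixedPts_inter_sgdsDom [T2Space X] (hσ : Continuous σ) (n : ℕ) :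
    closure (sgdsFixedPts σ n) ∩ sgdsDom σ n ⊆ sgdsFixedPts σ n := by
  have hsub : sgdsFixedPts σ n ⊆ closure (sgdsFixedPts σ n) ∩ sgdsDom σ n := fun x hx =>
    ⟨subset_closure hx, ((mem_sgdsFixedPts_iff σ).1 hx).1⟩
  have hEq : EqOn (sgdsExt σ)^[n] id (closure (sgdsFixedPts σ n) ∩ sgdsDom σ n) :=
    EqOn.of_subset_closure (fun x hx => ((mem_sgdsFixedPts_iff σ).1 hx).2)
      ((continuousOn_sgdsExt_iterate σ hσ n).mono inter_subset_right) continuousOn_id hsub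
      inter_subset_left
  exact fun x hx => (mem_sgdsFixedPts_iff σ).2 ⟨hx.2, hEq hx⟩

end SGDS

theorem statement18_general
    {X : Type*} [TopologicalSpace X] [T2Space X] [LocallyCompactSpace X]
    (W : Set X)
    (σ : ↥W → X) (hσ : IsLocalHomeomorph σ) :
    IsTopologicallyFree σ (Subtype.val : ↥W → X) ↔
      ∀ n : ℕ, 0 < n → interior {x : X | sgdsIter σ n x = Option.some x} = ∅ := by
  change _ ↔ ∀ n : ℕ, 0 < n → interior (sgdsFixedPts σ n) = ∅
  rw [isTopologicallyFree_iff, loopBases_eq_setOf_mem_sgdsFixedPts]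
  refine ⟨fun h n hn => subset_empty_iff.1 (h ▸ interior_mono fun x hx => ⟨n, hn, hx⟩),
    fun h => ?_⟩
  by_contra hne
  set V := interior {x | ∃ n, 0 < n ∧ x ∈ sgdsFixedPts σ n}
  have hcover : V ⊆ ⋃ n : ℕ, sgdsFixedPts σ (n + 1) ∩ V := fun x hx => by
    obtain ⟨n, hn, hxn⟩ := interior_subset hx
    exact mem_iUnion.2 ⟨n - 1, by rwa [Nat.sub_add_cancel hn], hx⟩
  obtain ⟨n, x, hx⟩ := exists_nonempty_interior_closure_of_subset_iUnion isOpen_interior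
    (nonempty_iff_ne_empty.2 hne) hcover
  set U := interior (closure (sgdsFixedPts σ (n + 1) ∩ V)) ∩ V
  have hU_ne : U.Nonempty := by
    obtain ⟨y, hy⟩ := mem_closure_iff.1 (interior_subset hx) _ isOpen_interior hx
    exact ⟨y, hy.1, hy.2.2⟩
  have hU_sub : U ⊆ sgdsFixedPts σ (n + 1) := fun y hy => by
    obtain ⟨m, hm, hym⟩ := interior_subset hy.2
    exact closure_sgdsFixedPts_inter_sgdsDom σ hσ.continuous (n + 1)
      ⟨closure_mono inter_subset_left (interior_subset hy.1),
        mem_sgdsDom_of_mem_sgdsFixedPts σ hm hym _⟩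
  have hU_int := interior_maximal hU_sub (isOpen_interior.inter isOpen_interior)
  rw [h (n + 1) n.succ_pos] at hU_int
  exact hU_ne.ne_empty (subset_empty_iff.1 hU_int)

/-- For a singly generated dynamical system `(X, σ)` with domain the open
set `W` and range the open set `O`, the associated topological graph
`E = (X, W, σ, inclusion)` is topologically free if and only if for every `n ≥ 1` the set
`{x ∈ dom(σⁿ) : σⁿ(x) = x}` has empty interior. -/
theorem statement18
    {X : Type*} [TopologicalSpace X] [T2Space X] [LocallyCompactSpace X]
    (W O : Set X) (hW : IsOpen W) (hO : IsOpen O)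
    (σ : ↥W → X) (hσ : IsLocalHomeomorph σ) (hrange : Set.range σ = O) :
    IsTopologicallyFree σ (Subtype.val : ↥W → X) ↔
      ∀ n : ℕ, 0 < n → interior {x : X | sgdsIter σ n x = Option.some x} = ∅ :=
  statement18_general W σ hσ

end TopGraphAux
end
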